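/- arXiv:2206.06727 — 3 statements merged into one kernel-verified Lean document; each statement's English description precedes it below -/
import Mathlib

section
/- For real numbers x_1,…,x_n and normalized elementary symmetric polynomials H_k = S_k(x)/C(n,k) (with H_0 = 1), for every k ∈ {0,…,n−2} one has H_k · H_{k+2} ≤ H_{k+1}², i.e. the Newton–Maclaurin inequality S_k(x)·S_{k+2}(x)/(C(n,k)·C(n,k+2)) ≤ (S_{k+1}(x)/C(n,k+1))². -/
/-- The `k`-th elementary symmetric polynomial of `x : Fin n → ℝ`. -/
noncomputable def esymmS (n : ℕ) (x : Fin n → ℝ) (k : ℕ) : ℝ :=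
  ∑ A ∈ Finset.powersetCard k (Finset.univ : Finset (Fin n)), ∏ i ∈ A, x i

/-- The normalized `k`-th elementary symmetric function `H_k = S_k(x)/C(n,k)`. -/
noncomputable def normH (n : ℕ) (x : Fin n → ℝ) (k : ℕ) : ℝ :=
  esymmS n x k / (n.choose k)

/-!
Real-rootedness of `p = ∏ (X - a)` survives two operations. Differentiation keeps the normalized
coefficients `H_0, …, H_{m-1}` (Rolle), and the reversal `a ↦ a⁻¹` reverses them up to the factor
`∏ a`. Differentiating reduces Newton's inequality to `k + 2 = m`, reversing turns that into
`k = 0`, and differentiating again leaves `m = 2`, where it reads `ab ≤ ((a + b) / 2)²`.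
-/

open Finset Polynomial

theorem Finset.prod_mul_sum_powersetCard_prod_inv {ι K : Type*} [DecidableEq ι] [Field K]
    {s : Finset ι} {f : ι → K} (hf : ∀ a ∈ s, f a ≠ 0) {i j : ℕ} (hij : i + j = #s) :
    (∏ a ∈ s, f a) * ∑ A ∈ s.powersetCard i, ∏ a ∈ A, (f a)⁻¹
      = ∑ B ∈ s.powersetCard j, ∏ a ∈ B, f a := by
  rw [mul_sum]
  refine sum_nbij' (s \ ·) (s \ ·) (fun A hA => ?_) (fun B hB => ?_) (fun A hA => ?_)
    (fun B hB => ?_) (fun A hA => ?_)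
  all_goals simp only [mem_powersetCard] at *
  · exact ⟨sdiff_subset, by rw [card_sdiff_of_subset hA.1]; omega⟩
  · exact ⟨sdiff_subset, by rw [card_sdiff_of_subset hB.1]; omega⟩
  · exact sdiff_sdiff_eq_self hA.1
  · exact sdiff_sdiff_eq_self hB.1
  · rw [← prod_sdiff hA.1, prod_inv_distrib, mul_assoc,
      mul_inv_cancel₀ (prod_ne_zero_iff.2 fun a ha => hf a (hA.1 ha)), mul_one]

theorem Polynomial.card_roots_derivative {p : ℝ[X]} (hp : Multiset.card p.roots = p.natDegree) :
    Multiset.card (derivative p).roots = p.natDegree - 1 ∧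
      (derivative p).natDegree = p.natDegree - 1 := by
  have := card_roots_le_derivative p
  have := card_roots' (derivative p)
  have := natDegree_derivative_le p
  omega

namespace Multiset

theorem prod_mul_esymm_map_inv {K : Type*} [Field K] {s : Multiset K} (hs : (0 : K) ∉ s)
    {i j : ℕ} (hij : i + j = card s) :
    s.prod * (s.map (·⁻¹)).esymm i = s.esymm j := by
  classical
  have key := Finset.prod_mul_sum_powersetCard_prod_inv (s := (univ : Finset s))
    (f := fun a => (a : K)) (fun a _ h => hs (h ▸ coe_mem))
    (by rwa [card_univ, card_coe])
  rwa [← prod_map_val, ← esymm_map_val, ← esymm_map_val, map_univ_coe, map_univ] at key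

theorem exists_esymm_roots_derivative (s : Multiset ℝ) :
    ∃ t : Multiset ℝ, card t = card s - 1 ∧
      ∀ j < card s, card s * t.esymm j = (card s - j : ℕ) * s.esymm j := by
  set p := (s.map fun a => X - C a).prod
  have hmonic : p.Monic := monic_multiset_prod_of_monic _ _ fun a _ => monic_X_sub_C a
  have hp : p.natDegree = card s := natDegree_multiset_prod_X_sub_C_eq_card s
  obtain ⟨hcard, hdeg⟩ :=
    card_roots_derivative (p := p) (by rw [roots_multiset_prod_X_sub_C, hp])
  rw [hp] at hcard hdeg
  refine ⟨(derivative p).roots, hcard, fun j hj => ?_⟩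
  have hlead : (derivative p).leadingCoeff = card s := by
    rw [leadingCoeff, hdeg, coeff_derivative, Nat.sub_add_cancel (by omega), ← hp,
      hmonic.coeff_natDegree, one_mul, Nat.cast_pred (by omega), sub_add_cancel]
  -- Vieta for `p'` and for `p`, read off at the coefficient of `X ^ (card s - 1 - j)` of `p'`
  have hq := coeff_eq_esymm_roots_of_card (p := derivative p) (by rw [hcard, hdeg])
    (k := card s - 1 - j) (by omega)
  rw [coeff_derivative, prod_X_sub_C_coeff s (by omega), hlead, hdeg,
    show card s - (card s - 1 - j + 1) = j by omega,
    show card s - 1 - (card s - 1 - j) = j by omega,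
    show ((card s - 1 - j : ℕ) : ℝ) + 1 = (card s - j : ℕ) by
      exact_mod_cast (by omega : card s - 1 - j + 1 = card s - j)] at hq
  exact mul_left_cancel₀ (pow_ne_zero j (neg_ne_zero.2 one_ne_zero)) (by linear_combination -hq)

noncomputable def normalizedEsymm (s : Multiset ℝ) (k : ℕ) : ℝ :=
  s.esymm k / (card s).choose k

theorem prod_mul_normalizedEsymm_map_inv {s : Multiset ℝ} (hs : (0 : ℝ) ∉ s) {i j : ℕ}
    (hij : i + j = card s) :
    s.prod * (s.map (·⁻¹)).normalizedEsymm i = s.normalizedEsymm j := by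
  rw [normalizedEsymm, normalizedEsymm, card_map, mul_div_assoc', prod_mul_esymm_map_inv hs hij,
    Nat.choose_symm_of_eq_add hij.symm]

theorem exists_normalizedEsymm_eq (s : Multiset ℝ) :
    ∃ t : Multiset ℝ, card t = card s - 1 ∧
      ∀ j < card s, t.normalizedEsymm j = s.normalizedEsymm j := by
  obtain ⟨t, ht, hst⟩ := s.exists_esymm_roots_derivative
  refine ⟨t, ht, fun j hj => ?_⟩
  have hchoose :
      ((card s - 1).choose j * card s : ℝ) = (card s).choose j * (card s - j : ℕ) := by
    exact_mod_cast
      Nat.sub_add_cancel (by omega : 1 ≤ card s) ▸ Nat.choose_mul_succ_eq (card s - 1) j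
  have hpos (m : ℕ) (hm : j ≤ m) : (m.choose j : ℝ) ≠ 0 := by
    exact_mod_cast (Nat.choose_pos hm).ne'
  rw [normalizedEsymm, normalizedEsymm, ht, div_eq_div_iff (hpos _ (by omega)) (hpos _ hj.le)]
  refine mul_left_cancel₀ (Nat.cast_ne_zero.2 (by omega : card s ≠ 0)) ?_
  linear_combination ((card s).choose j : ℝ) * hst j hj - s.esymm j * hchoose

variable {s : Multiset ℝ} {k : ℕ}

theorem normalizedEsymm_mul_le_sq_of_card_lt (h : card s < k + 2) :
    s.normalizedEsymm k * s.normalizedEsymm (k + 2) ≤ s.normalizedEsymm (k + 1) ^ 2 := by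
  have : s.normalizedEsymm (k + 2) = 0 := by
    rw [normalizedEsymm, Nat.choose_eq_zero_of_lt h, Nat.cast_zero, div_zero]
  rw [this, mul_zero]
  positivity

theorem normalizedEsymm_mul_le_sq_of_derivative (h : k + 2 < card s)
    (ih : ∀ t : Multiset ℝ, card t = card s - 1 →
      t.normalizedEsymm k * t.normalizedEsymm (k + 2) ≤ t.normalizedEsymm (k + 1) ^ 2) :
    s.normalizedEsymm k * s.normalizedEsymm (k + 2) ≤ s.normalizedEsymm (k + 1) ^ 2 := by
  obtain ⟨t, ht, hst⟩ := s.exists_normalizedEsymm_eq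
  rw [← hst k (by omega), ← hst (k + 1) (by omega), ← hst (k + 2) h]
  exact ih t ht

theorem normalizedEsymm_zero_mul_le_sq (s : Multiset ℝ) :
    s.normalizedEsymm 0 * s.normalizedEsymm 2 ≤ s.normalizedEsymm 1 ^ 2 := by
  induction h : card s using Nat.strong_induction_on generalizing s with
  | _ m ih =>
  rcases lt_trichotomy (card s) 2 with hlt | heq | hgt
  · exact normalizedEsymm_mul_le_sq_of_card_lt hlt
  · obtain ⟨a, b, rfl⟩ := card_eq_two.1 heq
    have hab : a * b ≤ ((b + a) / 2) ^ 2 := by nlinarith [sq_nonneg (a - b)]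
    simpa [normalizedEsymm, esymm, powersetCard_one] using hab
  · exact normalizedEsymm_mul_le_sq_of_derivative hgt fun t ht => ih _ (by omega) t rfl

theorem normalizedEsymm_mul_le_sq_of_card_eq (h : card s = k + 2) :
    s.normalizedEsymm k * s.normalizedEsymm (k + 2) ≤ s.normalizedEsymm (k + 1) ^ 2 := by
  by_cases h0 : (0 : ℝ) ∈ s
  · have : s.normalizedEsymm (k + 2) = 0 := by
      rw [normalizedEsymm, ← h, esymm, powersetCard_self]
      simp [prod_eq_zero h0]
    rw [this, mul_zero]
    positivity
  · have hrev (i j : ℕ) (hij : i + j = card s) := prod_mul_normalizedEsymm_map_inv h0 hij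
    rw [← hrev 2 k (by omega), ← hrev 1 (k + 1) (by omega), ← hrev 0 (k + 2) (by omega)]
    nlinarith [normalizedEsymm_zero_mul_le_sq (s.map (·⁻¹)), sq_nonneg s.prod]

theorem normalizedEsymm_mul_le_sq (s : Multiset ℝ) (k : ℕ) :
    s.normalizedEsymm k * s.normalizedEsymm (k + 2) ≤ s.normalizedEsymm (k + 1) ^ 2 := by
  induction h : card s using Nat.strong_induction_on generalizing s with
  | _ m ih =>
  rcases lt_trichotomy (card s) (k + 2) with hlt | heq | hgt
  · exact normalizedEsymm_mul_le_sq_of_card_lt hlt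
  · exact normalizedEsymm_mul_le_sq_of_card_eq heq
  · exact normalizedEsymm_mul_le_sq_of_derivative hgt fun t ht => ih _ (by omega) t rfl

end Multiset

theorem newton_maclaurin_general (n : ℕ) (x : Fin n → ℝ) (k : ℕ) :
    normH n x k * normH n x (k + 2) ≤ (normH n x (k + 1)) ^ 2 := by
  have hH (j : ℕ) : normH n x j = (univ.val.map x).normalizedEsymm j := by
    rw [normH, esymmS, Multiset.normalizedEsymm, esymm_map_val, Multiset.card_map, card_val,
      card_univ, Fintype.card_fin]
  simpa only [hH] using (univ.val.map x).normalizedEsymm_mul_le_sq k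

/-- Newton–Maclaurin inequality: `H_k · H_{k+2} ≤ H_{k+1}²` for all real `x`. -/
theorem newton_maclaurin (n : ℕ) (hn : 2 ≤ n) (x : Fin n → ℝ) (k : ℕ)
    (hk : k ≤ n - 2) :
    normH n x k * normH n x (k + 2) ≤ (normH n x (k + 1)) ^ 2 :=
  newton_maclaurin_general n x k
end

section
/- For nonnegative reals x_1,…,x_n with normalized symmetric functions H_k = S_k(x)/C(n,k), if H_r > 0 for some r ∈ {2,…,n} then H_{r−1} ≥ H_r^{(r−1)/r}. -/
/-!
The derivative argument for Maclaurin's inequality. If `p = ∏ (X + xᵢ)` with `xᵢ ≥ 0`, then by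
Rolle's theorem `p'` splits over `ℝ`, and its roots are `≤ 0` since its coefficients are
nonnegative; so `p' = n ∏ (X + yⱼ)` for `n - 1` reals `yⱼ ≥ 0`. Comparing coefficients,
`n eₘ(y) = (n - m) eₘ(x)`, i.e. `Hₘ(y) = Hₘ(x)` for `m < n`. Descending from `n` to `r` variables
this way reduces `H_r ^ (r - 1) ≤ H_{r-1} ^ r` to the case `r = n`, which is AM-GM for the `n`
numbers `∏_{j ≠ i} xⱼ`, whose product is `(∏ xᵢ) ^ (n - 1)`.
-/

open Finset Polynomial

namespace Finset

theorem prod_prod_erase {ι M : Type*} [CommMonoid M] [DecidableEq ι] (s : Finset ι)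
    (f : ι → M) : ∏ i ∈ s, ∏ j ∈ s.erase i, f j = (∏ i ∈ s, f i) ^ (#s - 1) := by
  rw [prod_comm' (t' := s) (s' := s.erase) (by grind), ← prod_pow]
  exact prod_congr rfl fun i hi => by rw [prod_const, card_erase_of_mem hi]

theorem powersetCard_card_sub_one {ι : Type*} [DecidableEq ι] {s : Finset ι}
    (hs : s.Nonempty) : s.powersetCard (#s - 1) = s.image s.erase := by
  ext A
  simp only [mem_powersetCard, mem_image]
  constructor
  · rintro ⟨hAs, hA⟩
    obtain ⟨i, hi⟩ : ∃ i, s \ A = {i} :=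
      card_eq_one.1 (by rw [card_sdiff_of_subset hAs]; have := hs.card_pos; omega)
    have his : i ∈ s := (mem_sdiff.1 (hi ▸ mem_singleton_self i)).1
    exact ⟨i, his, by rw [← sdiff_singleton_eq_erase, ← hi, sdiff_sdiff_eq_self hAs]⟩
  · rintro ⟨i, hi, rfl⟩
    exact ⟨erase_subset i s, card_erase_of_mem hi⟩

end Finset

theorem Real.prod_le_arith_mean_pow {ι : Type*} {s : Finset ι} (hs : s.Nonempty) {f : ι → ℝ}
    (hf : ∀ i ∈ s, 0 ≤ f i) : ∏ i ∈ s, f i ≤ ((∑ i ∈ s, f i) / #s) ^ #s := by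
  have hcard : (#s : ℝ) ≠ 0 := by exact_mod_cast hs.card_pos.ne'
  have h := Real.geom_mean_le_arith_mean_weighted s (fun _ => (#s : ℝ)⁻¹) f
    (fun _ _ => by positivity) (by simp [hcard]) hf
  rw [Real.finsetProd_rpow s f hf, ← mul_sum, inv_mul_eq_div] at h
  calc ∏ i ∈ s, f i = ((∏ i ∈ s, f i) ^ (#s : ℝ)⁻¹) ^ #s :=
        (Real.rpow_inv_natCast_pow (prod_nonneg hf) hs.card_pos.ne').symm
    _ ≤ _ := by gcongr; exact Real.rpow_nonneg (prod_nonneg hf) _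

theorem Finset.esymm_card_pow_le {ι : Type*} {s : Finset ι} (hs : s.Nonempty) {f : ι → ℝ}
    (hf : ∀ i ∈ s, 0 ≤ f i) :
    (s.val.map f).esymm #s ^ (#s - 1) ≤ ((s.val.map f).esymm (#s - 1) / #s) ^ #s := by
  classical
  rw [esymm_map_val, esymm_map_val, powersetCard_self, sum_singleton,
    powersetCard_card_sub_one hs, sum_image (erase_injOn s), ← prod_prod_erase]
  exact Real.prod_le_arith_mean_pow hs fun i _ => prod_nonneg fun j hj => hf j (mem_of_mem_erase hj)

namespace Polynomial

theorem Splits.real_derivative {p : ℝ[X]} (hp : p.Splits) : (derivative p).Splits := by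
  rw [splits_iff_card_roots] at hp ⊢
  have := p.card_roots_le_derivative
  have := (derivative p).card_roots'
  rw [natDegree_derivative] at this ⊢
  omega

theorem eval_pos_of_coeff_nonneg {p : ℝ[X]} (hp0 : p ≠ 0) (hp : ∀ i, 0 ≤ p.coeff i) {z : ℝ}
    (hz : 0 < z) : 0 < p.eval z := by
  rw [eval_eq_sum_range]
  calc 0 < p.leadingCoeff * z ^ p.natDegree :=
        mul_pos ((hp _).lt_of_ne' (leadingCoeff_ne_zero.2 hp0)) (pow_pos hz _)
    _ ≤ _ := single_le_sum (f := fun i => p.coeff i * z ^ i)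
        (fun i _ => mul_nonneg (hp i) (pow_nonneg hz.le _)) (self_mem_range_succ _)

theorem nonpos_of_mem_roots_of_coeff_nonneg {p : ℝ[X]} (hp : ∀ i, 0 ≤ p.coeff i) {z : ℝ}
    (hz : z ∈ p.roots) : z ≤ 0 := by
  obtain ⟨hp0, hroot⟩ := mem_roots'.1 hz
  by_contra! hz0
  exact (eval_pos_of_coeff_nonneg hp0 hp hz0).ne' hroot

section DerivativeOfProd

variable (u : Multiset ℝ)

theorem splits_derivative_prod_X_sub_C :
    (derivative (u.map fun a => X - C a).prod).Splits :=
  (Splits.multisetProd (by simp [Splits.X_sub_C])).real_derivative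

theorem card_roots_derivative_prod_X_sub_C :
    Multiset.card (derivative (u.map fun a => X - C a).prod).roots = Multiset.card u - 1 := by
  rw [splits_iff_card_roots.1 (splits_derivative_prod_X_sub_C u), natDegree_derivative,
    natDegree_multiset_prod_X_sub_C_eq_card]

theorem card_mul_esymm_roots_derivative_prod_X_sub_C {m : ℕ} (hm : m < Multiset.card u) :
    (Multiset.card u : ℝ) * (derivative (u.map fun a => X - C a).prod).roots.esymm m
      = (Multiset.card u - m : ℝ) * u.esymm m := by
  set p := (u.map fun a => X - C a).prod
  set n := Multiset.card u
  have hdeg : (derivative p).natDegree = n - 1 := by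
    rw [natDegree_derivative, natDegree_multiset_prod_X_sub_C_eq_card]
  have hlead : (derivative p).leadingCoeff = n := by
    rw [leadingCoeff, hdeg, coeff_derivative, Nat.sub_add_cancel (by omega),
      Multiset.prod_X_sub_C_coeff u le_rfl]
    simp [n, Nat.cast_sub (by omega : 1 ≤ n), Multiset.esymm]
  have h := coeff_eq_esymm_roots_of_splits (splits_derivative_prod_X_sub_C u)
    (k := n - 1 - m) (by rw [hdeg]; omega)
  rw [coeff_derivative, Multiset.prod_X_sub_C_coeff u (by omega), hlead, hdeg,
    show n - 1 - (n - 1 - m) = m by omega, show n - (n - 1 - m + 1) = m by omega] at h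
  have hcast : ((n - 1 - m : ℕ) : ℝ) + 1 = n - m := by
    rw [Nat.cast_sub (by omega), Nat.cast_sub (by omega)]; ring
  rw [hcast] at h
  apply mul_left_cancel₀ (pow_ne_zero m (neg_ne_zero.2 one_ne_zero) : (-1 : ℝ) ^ m ≠ 0)
  linear_combination -h

end DerivativeOfProd

end Polynomial

namespace Multiset

theorem esymm_nonneg {s : Multiset ℝ} (hs : ∀ a ∈ s, 0 ≤ a) (k : ℕ) : 0 ≤ s.esymm k :=
  sum_nonneg fun _ hp => by
    obtain ⟨t, ht, rfl⟩ := mem_map.1 hp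
    exact prod_nonneg fun a ha => hs a (mem_of_le (mem_powersetCard.1 ht).1 ha)

theorem coeff_prod_X_add_C_nonneg {s : Multiset ℝ} (hs : ∀ a ∈ s, 0 ≤ a) (k : ℕ) :
    0 ≤ (s.map fun a => X + C a).prod.coeff k := by
  rcases le_or_gt k (card s) with hk | hk
  · rw [prod_X_add_C_coeff s hk]
    exact esymm_nonneg hs _
  · refine (coeff_eq_zero_of_natDegree_lt ((natDegree_multiset_prod_le _).trans_lt ?_)).ge
    simpa [map_map, Function.comp_def] using hk

noncomputable def normEsymm (s : Multiset ℝ) (k : ℕ) : ℝ :=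
  s.esymm k / (card s).choose k

theorem normEsymm_nonneg {s : Multiset ℝ} (hs : ∀ a ∈ s, 0 ≤ a) (k : ℕ) : 0 ≤ s.normEsymm k :=
  div_nonneg (esymm_nonneg hs k) (Nat.cast_nonneg _)

theorem normEsymm_card_pow_le {s : Multiset ℝ} (hs : ∀ a ∈ s, 0 ≤ a) (h : 0 < card s) :
    s.normEsymm (card s) ^ (card s - 1) ≤ s.normEsymm (card s - 1) ^ card s := by
  have key := Finset.esymm_card_pow_le (s := (univ : Finset s)) (f := fun x : s => (x : ℝ))
    (univ_nonempty_iff.2 (Fintype.card_pos_iff.1 (by rwa [card_coe])))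
    (fun _ _ => hs _ coe_mem)
  rw [map_univ_coe, card_univ, card_coe] at key
  rw [normEsymm, normEsymm, Nat.choose_self, Nat.choose_symm h, Nat.choose_one_right]
  simpa using key

theorem normEsymm_eq_of_card_mul_esymm_eq {s t : Multiset ℝ} (hcard : card t = card s - 1)
    {m : ℕ} (hm : m < card s) (h : (card s : ℝ) * t.esymm m = (card s - m) * s.esymm m) :
    t.normEsymm m = s.normEsymm m := by
  obtain ⟨k, hk⟩ : ∃ k, card s = k + 1 := ⟨card s - 1, by omega⟩
  rw [hk, Nat.add_sub_cancel] at hcard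
  have hchoose : ((card t).choose m : ℝ) * card s = (card s).choose m * (card s - m) := by
    rw [hcard, hk, ← Nat.cast_sub (hk ▸ hm.le)]
    exact_mod_cast Nat.choose_mul_succ_eq k m
  have hpos : (0 : ℝ) < card s - m := sub_pos.2 (by exact_mod_cast hm)
  rw [normEsymm, normEsymm, div_eq_div_iff (Nat.cast_ne_zero.2 (Nat.choose_pos (by omega)).ne')
    (Nat.cast_ne_zero.2 (Nat.choose_pos hm.le).ne')]
  apply mul_right_cancel₀ hpos.ne'
  linear_combination (-t.esymm m) * hchoose + ((card t).choose m : ℝ) * h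

theorem exists_nonneg_normEsymm_eq {s : Multiset ℝ} (hs : ∀ a ∈ s, 0 ≤ a) :
    ∃ t : Multiset ℝ, card t = card s - 1 ∧ (∀ a ∈ t, 0 ≤ a) ∧
      ∀ m < card s, t.normEsymm m = s.normEsymm m := by
  set q := derivative ((s.map Neg.neg).map fun a => X - C a).prod
  have hcoeff : ∀ i, 0 ≤ q.coeff i := fun i => by
    have hq : q = derivative (s.map fun a => X + C a).prod := by
      simp [q, map_map, sub_eq_add_neg]
    rw [hq, coeff_derivative]
    exact mul_nonneg (coeff_prod_X_add_C_nonneg hs _) (by positivity)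
  have hcard : card (q.roots.map Neg.neg) = card s - 1 := by
    rw [card_map, card_roots_derivative_prod_X_sub_C, card_map]
  refine ⟨q.roots.map Neg.neg, hcard, ?_, fun m hm => normEsymm_eq_of_card_mul_esymm_eq hcard hm ?_⟩
  · simp only [mem_map]
    rintro _ ⟨z, hz, rfl⟩
    exact neg_nonneg.2 (nonpos_of_mem_roots_of_coeff_nonneg hcoeff hz)
  · have h := card_mul_esymm_roots_derivative_prod_X_sub_C (s.map Neg.neg) (m := m)
      (by rwa [card_map])
    have hs' : s.esymm m = (-1) ^ m * (s.map Neg.neg).esymm m := by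
      rw [← esymm_neg, map_map]; simp
    rw [card_map] at h
    rw [esymm_neg, hs']
    linear_combination (-1 : ℝ) ^ m * h

theorem normEsymm_pow_le {s : Multiset ℝ} (hs : ∀ a ∈ s, 0 ≤ a) {r : ℕ} (hr : 0 < r)
    (hrs : r ≤ card s) : s.normEsymm r ^ (r - 1) ≤ s.normEsymm (r - 1) ^ r := by
  obtain ⟨n, hn⟩ : ∃ n, card s = n := ⟨_, rfl⟩
  induction n generalizing s with
  | zero => omega
  | succ n ih =>
    rcases hrs.eq_or_lt with rfl | hlt
    · exact normEsymm_card_pow_le hs hr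
    · obtain ⟨t, ht, htnn, heq⟩ := exists_nonneg_normEsymm_eq hs
      rw [← heq r hlt, ← heq (r - 1) (by omega)]
      exact ih htnn (by omega) (by omega)

end Multiset

theorem Real.rpow_natCast_div_le_of_pow_le {a b : ℝ} (ha : 0 ≤ a) (hb : 0 ≤ b) {m r : ℕ}
    (hr : r ≠ 0) (h : a ^ m ≤ b ^ r) : a ^ ((m : ℝ) / r) ≤ b := by
  rw [div_eq_mul_inv, Real.rpow_mul ha, Real.rpow_natCast, ← Real.pow_rpow_inv_natCast hb hr]
  gcongr

theorem normH_eq_normEsymm (n : ℕ) (x : Fin n → ℝ) (k : ℕ) :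
    normH n x k = (univ.val.map x).normEsymm k := by
  rw [normH, esymmS, Multiset.normEsymm, esymm_map_val, Multiset.card_map, card_val, card_univ,
    Fintype.card_fin]

theorem Hrm1_ge_Hr_pow_general (n r : ℕ) (hr2 : 2 ≤ r) (hrn : r ≤ n)
    (x : Fin n → ℝ) (hx : ∀ i, 0 ≤ x i) :
    (normH n x r) ^ (((r : ℝ) - 1) / r) ≤ normH n x (r - 1) := by
  have hs : ∀ a ∈ univ.val.map x, 0 ≤ a := by simpa using hx
  have hexp : ((r : ℝ) - 1) = ((r - 1 : ℕ) : ℝ) := by rw [Nat.cast_sub (by omega), Nat.cast_one]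
  rw [normH_eq_normEsymm, normH_eq_normEsymm, hexp]
  exact Real.rpow_natCast_div_le_of_pow_le (Multiset.normEsymm_nonneg hs _)
    (Multiset.normEsymm_nonneg hs _) (by omega)
    (Multiset.normEsymm_pow_le hs (by omega) (by simpa using hrn))

/-- For nonnegative `x` with `H_r > 0`, `r ∈ {2,…,n}`, one has `H_{r-1} ≥ H_r^{(r-1)/r}`. -/
theorem Hrm1_ge_Hr_pow (n r : ℕ) (hn : 2 ≤ n) (hr2 : 2 ≤ r) (hrn : r ≤ n)
    (x : Fin n → ℝ) (hx : ∀ i, 0 ≤ x i) (hpos : 0 < normH n x r) :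
    (normH n x r) ^ (((r : ℝ) - 1) / r) ≤ normH n x (r - 1) :=
  Hrm1_ge_Hr_pow_general n r hr2 hrn x hx
end

section
/- Equality case of Maclaurin: for nonnegative reals x_1,…,x_n with H_{r}>0, if H_{r}^{1/r} = H_1 for some r ∈ {2,…,n}, then x_1 = x_2 = ⋯ = x_n. -/
open Finset

namespace Finset

variable {α ι R β : Type*}

theorem sum_powersetCard_succ_sum_erase [DecidableEq α] [AddCommMonoid β] (s : Finset α)
    (m : ℕ) (F : Finset α → α → β) :
    ∑ A ∈ s.powersetCard (m + 1), ∑ i ∈ A, F (A.erase i) i =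
      ∑ B ∈ s.powersetCard m, ∑ i ∈ s \ B, F B i := by
  rw [sum_sigma', sum_sigma']
  refine sum_nbij' (fun p => ⟨p.1.erase p.2, p.2⟩) (fun p => ⟨insert p.2 p.1, p.2⟩)
    ?_ ?_ ?_ ?_ fun _ _ => rfl
  · rintro ⟨A, i⟩ h
    simp only [mem_sigma, mem_powersetCard] at h ⊢
    refine ⟨⟨(erase_subset i A).trans h.1.1, ?_⟩, ?_⟩
    · rw [card_erase_of_mem h.2, h.1.2, Nat.add_sub_cancel]
    · simp [h.1.1 h.2]
  · rintro ⟨B, i⟩ h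
    simp only [mem_sigma, mem_powersetCard, mem_sdiff] at h ⊢
    exact ⟨⟨insert_subset h.2.1 h.1.1, by rw [card_insert_of_notMem h.2.2, h.1.2]⟩,
      mem_insert_self _ _⟩
  · rintro ⟨A, i⟩ h
    simp only [mem_sigma] at h
    simp [insert_erase h.2]
  · rintro ⟨B, i⟩ h
    simp only [mem_sigma, mem_sdiff] at h
    simp [erase_insert h.2.2]

theorem sum_powersetCard_sum_sdiff_insert [DecidableEq α] [AddCommMonoid β] (s : Finset α)
    (m : ℕ) (G : Finset α → β) :
    ∑ B ∈ s.powersetCard m, ∑ i ∈ s \ B, G (insert i B) =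
      (m + 1) • ∑ A ∈ s.powersetCard (m + 1), G A := by
  rw [← sum_powersetCard_succ_sum_erase, smul_sum]
  refine sum_congr rfl fun A hA => ?_
  rw [← (mem_powersetCard.1 hA).2, ← sum_const]
  exact sum_congr rfl fun i hi => by rw [insert_erase hi]

theorem sum_sum_erase_mul [DecidableEq ι] [CommRing R] (s : Finset ι) (f : ι → R) :
    ∑ i ∈ s, ∑ j ∈ s.erase i, f i * f j = (∑ i ∈ s, f i) ^ 2 - ∑ i ∈ s, f i ^ 2 := by
  rw [sq, sum_mul, ← sum_sub_distrib]
  refine sum_congr rfl fun i hi => ?_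
  rw [← mul_sum, sum_erase_eq_sub hi]
  ring

theorem sum_sum_sub_sq [CommRing R] (s : Finset ι) (f : ι → R) :
    ∑ i ∈ s, ∑ j ∈ s, (f i - f j) ^ 2 = 2 * (#s * ∑ i ∈ s, f i ^ 2 - (∑ i ∈ s, f i) ^ 2) := by
  simp only [sub_sq, sum_add_distrib, sum_sub_distrib, sum_const, mul_assoc, ← mul_sum, ← sum_mul,
    nsmul_eq_mul]
  ring

theorem sum_sum_erase_mul_le [DecidableEq ι] [CommRing R] [LinearOrder R] [IsStrictOrderedRing R]
    (s : Finset ι) (f : ι → R) :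
    ∑ i ∈ s, ∑ j ∈ s.erase i, f i * f j ≤ (#s - 1) * ∑ i ∈ s, f i ^ 2 := by
  rw [sum_sum_erase_mul, sub_one_mul]
  linarith [sq_sum_le_card_mul_sum_sq (s := s) (f := f)]

theorem eq_of_card_mul_sum_sq_le [Fintype ι] [CommRing R] [LinearOrder R] [IsStrictOrderedRing R]
    {f : ι → R} (h : Fintype.card ι * ∑ i, f i ^ 2 ≤ (∑ i, f i) ^ 2) (i j : ι) : f i = f j := by
  have hnonneg : ∀ i ∈ univ, 0 ≤ ∑ j, (f i - f j) ^ 2 := fun i _ =>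
    sum_nonneg fun j _ => sq_nonneg _
  have hzero : ∑ i, ∑ j, (f i - f j) ^ 2 = 0 := by
    refine le_antisymm ?_ (sum_nonneg hnonneg)
    rw [sum_sum_sub_sq, card_univ]
    linarith
  have hij := (sum_eq_zero_iff_of_nonneg fun j _ => sq_nonneg (f i - f j)).1
    ((sum_eq_zero_iff_of_nonneg hnonneg).1 hzero i (mem_univ i)) j (mem_univ j)
  exact sub_eq_zero.1 (pow_eq_zero_iff two_ne_zero |>.1 hij)

end Finset

-- The terms of `(∑ i, x i) * esymmS n x k` whose extra factor `x i` already occurs in the monomial.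
noncomputable def esymmSDiag (n : ℕ) (x : Fin n → ℝ) (k : ℕ) : ℝ :=
  ∑ A ∈ powersetCard k univ, (∑ i ∈ A, x i) * ∏ i ∈ A, x i

section

variable {n : ℕ} (x : Fin n → ℝ)

lemma sum_sdiff_mul_prod_eq_esymmS (k : ℕ) :
    ∑ B ∈ powersetCard k univ, ∑ i ∈ univ \ B, x i * ∏ j ∈ B, x j =
      (k + 1) * esymmS n x (k + 1) := by
  have h : ∀ B : Finset (Fin n), ∀ i ∈ univ \ B, x i * ∏ j ∈ B, x j = ∏ j ∈ insert i B, x j :=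
    fun B i hi => (prod_insert (mem_sdiff.1 hi).2).symm
  rw [sum_congr rfl fun B _ => sum_congr rfl (h B),
    sum_powersetCard_sum_sdiff_insert univ k fun A => ∏ j ∈ A, x j, nsmul_eq_mul, esymmS]
  push_cast
  rfl

lemma esymmS_one : esymmS n x 1 = ∑ i, x i := by
  simpa using (sum_sdiff_mul_prod_eq_esymmS x 0).symm

lemma sum_mul_esymmS (k : ℕ) :
    (∑ i, x i) * esymmS n x k = (k + 1) * esymmS n x (k + 1) + esymmSDiag n x k := by
  rw [← sum_sdiff_mul_prod_eq_esymmS, esymmSDiag, esymmS, mul_sum, ← sum_add_distrib]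
  refine sum_congr rfl fun B _ => ?_
  rw [← sum_mul, ← add_mul, sum_sdiff (subset_univ B)]

lemma esymmSDiag_succ (m : ℕ) :
    esymmSDiag n x (m + 1) =
      ∑ B ∈ powersetCard m univ, ∑ i ∈ univ \ B, x i ^ 2 * ∏ j ∈ B, x j := by
  rw [← sum_powersetCard_succ_sum_erase, esymmSDiag]
  refine sum_congr rfl fun A _ => ?_
  rw [sum_mul]
  refine sum_congr rfl fun i hi => ?_
  rw [← mul_prod_erase A x hi]
  ring

lemma two_mul_esymmS_two :
    2 * esymmS n x 2 = (∑ i, x i) ^ 2 - ∑ i, x i ^ 2 := by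
  have hdiag : esymmSDiag n x 1 = ∑ i, x i ^ 2 := by simp [esymmSDiag_succ]
  have := sum_mul_esymmS x 1
  rw [esymmS_one, hdiag] at this
  linear_combination -this

lemma sum_sdiff_sum_erase_mul_prod_eq_esymmS (m : ℕ) :
    ∑ B ∈ powersetCard m univ, ∑ i ∈ univ \ B, ∑ j ∈ (univ \ B).erase i,
        x i * x j * ∏ k ∈ B, x k =
      (m + 1) * (m + 2) * esymmS n x (m + 2) := by
  have h : ∀ B : Finset (Fin n), ∀ i ∈ univ \ B,
      ∑ j ∈ (univ \ B).erase i, x i * x j * ∏ k ∈ B, x k =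
        ∑ j ∈ univ \ insert i B, x j * ∏ k ∈ insert i B, x k := by
    intro B i hi
    rw [sdiff_insert, prod_insert (mem_sdiff.1 hi).2]
    exact sum_congr rfl fun j _ => by ring
  rw [sum_congr rfl fun B _ => sum_congr rfl (h B),
    sum_powersetCard_sum_sdiff_insert univ m fun A => ∑ j ∈ univ \ A, x j * ∏ k ∈ A, x k,
    sum_sdiff_mul_prod_eq_esymmS, nsmul_eq_mul]
  push_cast
  ring

lemma normH_one : normH n x 1 = (∑ i, x i) / n := by
  rw [normH, esymmS_one, Nat.choose_one_right]

variable {x}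

lemma mul_esymmS_succ_le_esymmSDiag (hx : ∀ i, 0 ≤ x i) (k : ℕ) :
    k * (k + 1) * esymmS n x (k + 1) ≤ (n - k) * esymmSDiag n x k := by
  obtain _ | m := k
  · simp [esymmSDiag]
  rw [esymmSDiag_succ, mul_sum]
  push_cast
  rw [add_assoc, one_add_one_eq_two, ← sum_sdiff_sum_erase_mul_prod_eq_esymmS]
  refine sum_le_sum fun B hB => ?_
  obtain ⟨-, hBcard⟩ := mem_powersetCard.1 hB
  have hcard : (#(univ \ B) : ℝ) - 1 = n - (m + 1) := by
    have hm : m ≤ n := by simpa [hBcard] using card_le_univ B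
    rw [card_univ_sdiff, Fintype.card_fin, hBcard, Nat.cast_sub hm]
    ring
  have hp : 0 ≤ ∏ k ∈ B, x k := prod_nonneg fun k _ => hx k
  simp_rw [← sum_mul]
  rw [← mul_assoc, ← hcard]
  exact mul_le_mul_of_nonneg_right (sum_sum_erase_mul_le _ x) hp

lemma card_mul_esymmS_succ_le (hx : ∀ i, 0 ≤ x i) (k : ℕ) :
    n * (k + 1) * esymmS n x (k + 1) ≤ (n - k) * ((∑ i, x i) * esymmS n x k) := by
  linear_combination -(n - k : ℝ) * sum_mul_esymmS x k + mul_esymmS_succ_le_esymmSDiag hx k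

lemma normH_nonneg (hx : ∀ i, 0 ≤ x i) (k : ℕ) : 0 ≤ normH n x k :=
  div_nonneg (sum_nonneg fun _ _ => prod_nonneg fun i _ => hx i) (Nat.cast_nonneg _)

lemma normH_succ_le (hx : ∀ i, 0 ≤ x i) {k : ℕ} (hk : k < n) :
    normH n x (k + 1) ≤ normH n x 1 * normH n x k := by
  have hc : (0 : ℝ) < n.choose k := by exact_mod_cast Nat.choose_pos hk.le
  have hc' : (0 : ℝ) < n.choose (k + 1) := by exact_mod_cast Nat.choose_pos hk
  have hn : (0 : ℝ) < n := by exact_mod_cast (k.zero_le.trans_lt hk)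
  have hchoose : (n.choose (k + 1) : ℝ) * (k + 1) = n.choose k * (n - k) := by
    rw [← Nat.cast_sub hk.le]
    exact_mod_cast Nat.choose_succ_right_eq n k
  rw [normH_one, normH, normH, div_mul_div_comm, div_le_div_iff₀ hc' (mul_pos hn hc)]
  refine le_of_mul_le_mul_right ?_ k.cast_add_one_pos
  calc esymmS n x (k + 1) * (n * n.choose k) * (k + 1)
      = n.choose k * (n * (k + 1) * esymmS n x (k + 1)) := by ring
    _ ≤ n.choose k * ((n - k) * ((∑ i, x i) * esymmS n x k)) :=
      mul_le_mul_of_nonneg_left (card_mul_esymmS_succ_le hx k) hc.le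
    _ = (∑ i, x i) * esymmS n x k * n.choose (k + 1) * (k + 1) := by
      rw [mul_assoc _ (n.choose (k + 1) : ℝ), hchoose]
      ring

lemma normH_add_two_le (hx : ∀ i, 0 ≤ x i) (k : ℕ) (hk : k + 2 ≤ n) :
    normH n x (k + 2) ≤ normH n x 1 ^ k * normH n x 2 := by
  induction k with
  | zero => simp
  | succ k ih =>
    calc normH n x (k + 3) ≤ normH n x 1 * normH n x (k + 2) := normH_succ_le hx (by omega)
      _ ≤ normH n x 1 * (normH n x 1 ^ k * normH n x 2) :=
        mul_le_mul_of_nonneg_left (ih (by omega)) (normH_nonneg hx 1)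
      _ = normH n x 1 ^ (k + 1) * normH n x 2 := by ring

lemma eq_of_sq_normH_one_le_normH_two (hn : 2 ≤ n) (h : normH n x 1 ^ 2 ≤ normH n x 2)
    (i j : Fin n) : x i = x j := by
  refine eq_of_card_mul_sum_sq_le ?_ i j
  rw [Fintype.card_fin]
  have hn' : (2 : ℝ) ≤ n := by exact_mod_cast hn
  have hn0 : (0 : ℝ) < n := by linarith
  rw [normH_one, normH, Nat.cast_choose_two, div_pow,
    div_le_div_iff₀ (by positivity) (by nlinarith)] at h
  refine le_of_mul_le_mul_left ?_ hn0
  linear_combination 2 * h + n ^ 2 * two_mul_esymmS_two x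

end

/-- Equality case of Maclaurin: for nonnegative `x` with `H_r > 0`, if
`H_r^{1/r} = H_1` for some `r ∈ {2,…,n}`, then all `x_i` are equal. -/
theorem maclaurin_equality_case (n r : ℕ) (hn : 2 ≤ n) (hr2 : 2 ≤ r) (hrn : r ≤ n)
    (x : Fin n → ℝ) (hx : ∀ i, 0 ≤ x i) (hpos : 0 < normH n x r)
    (heq : (normH n x r) ^ ((1 : ℝ) / r) = normH n x 1) :
    ∀ i j, x i = x j := by
  obtain ⟨k, rfl⟩ : ∃ k, r = k + 2 := ⟨r - 2, by omega⟩
  have hH1 : 0 < normH n x 1 := heq ▸ Real.rpow_pos_of_pos hpos _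
  have hpow : normH n x 1 ^ (k + 2) = normH n x (k + 2) := by
    rw [← heq, one_div]
    exact_mod_cast Real.rpow_inv_natCast_pow hpos.le (by omega)
  have hchain := normH_add_two_le hx k hrn
  rw [← hpow, pow_add] at hchain
  exact eq_of_sq_normH_one_le_normH_two hn (le_of_mul_le_mul_left hchain (pow_pos hH1 k))
end
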